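/- arXiv:1110.0189 — 3 statements merged into one kernel-verified Lean document; each statement's English description precedes it below -/
import Mathlib

section
/- Define the map Φ₂ on words on {1,2} by Φ₂(1^{m_0} 2^{n_0} 1^{m_1} 2^{n_1} ⋯ 1^{m_d} 2^{n_d}) = 1^{m_d−1} 2 1^{m_{d−1}−1} 2 ⋯ 1^{m_1−1} 2 1^{m_0} 2^{n_0−1} 1 2^{n_1−1} ⋯ 2^{n_{d−1}−1} 1 2^{n_d} (where d = des(ω)). Then for every word ω on {1,2}, des(ω) = exc(Φ₂(ω)), where exc(Φ₂(ω)) is the number of indices i ≤ N_ω(1) with (Φ₂(ω))_i = 2, N_ω(1) denoting the number of 1's in ω. -/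
/-- Count the leading letters of a list equal to `a`; return the count and the rest. -/
def leadCount (a : ℕ) : List ℕ → ℕ × List ℕ
  | [] => (0, [])
  | b :: rest =>
    if b = a then
      let p := leadCount a rest
      (p.1 + 1, p.2)
    else (0, b :: rest)

def blocksAux : ℕ → List ℕ → List (ℕ × ℕ)
  | 0, _ => []
  | _, [] => []
  | fuel + 1, w =>
    let p := leadCount 1 w
    let q := leadCount 2 p.2
    (p.1, q.1) :: blocksAux fuel q.2

/-- The descent-block decomposition `[(m₀,n₀),…,(m_d,n_d)]` of a binary word
`1^{m₀} 2^{n₀} ⋯ 1^{m_d} 2^{n_d}`. -/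
def blocks (w : List ℕ) : List (ℕ × ℕ) := blocksAux w.length w

/-- The word `1^{m₀} 2^{n₀} ⋯ 1^{m_d} 2^{n_d}` determined by blocks. -/
def blockWord (bs : List (ℕ × ℕ)) : List ℕ :=
  bs.flatMap fun p => List.replicate p.1 1 ++ List.replicate p.2 2

/-- `[(m₀,n₀),…,(m_d,n_d)]` is a valid descent-block decomposition:
`m_i > 0` for `1 ≤ i ≤ d` and `n_j > 0` for `0 ≤ j ≤ d-1`. -/
def ValidBlocks (bs : List (ℕ × ℕ)) : Prop :=
  bs ≠ [] ∧ (∀ p ∈ bs.tail, 0 < p.1) ∧ (∀ p ∈ bs.dropLast, 0 < p.2)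

/-- A word on the alphabet {1,2}. -/
def IsBinary (w : List ℕ) : Prop := ∀ a ∈ w, a = 1 ∨ a = 2

/-- The descent number of a word. -/
def des (w : List ℕ) : ℕ := (w.zip w.tail).countP fun p => decide (p.2 < p.1)

/-- The excedance number of a binary word with `k` ones: the number of
positions `i ≤ k` carrying the letter 2. -/
def exc (w : List ℕ) : ℕ := (w.take (w.count 1)).count 2

/-- `Ψ = Φ₁⁻¹` on binary words, via the descent-block decomposition. -/
def psiBlocks (bs : List (ℕ × ℕ)) : List ℕ :=
  List.replicate (bs.headD (0,0)).1 1
    ++ bs.tail.flatMap (fun p => 2 :: List.replicate (p.1 - 1) 1)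
    ++ bs.dropLast.flatMap (fun p => List.replicate (p.2 - 1) 2 ++ [1])
    ++ List.replicate (bs.getLastD (0,0)).2 2

def Psi (w : List ℕ) : List ℕ := psiBlocks (blocks w)

/-- Foata's second fundamental transformation on binary words. -/
def phi2Blocks (bs : List (ℕ × ℕ)) : List ℕ :=
  bs.tail.reverse.flatMap (fun p => List.replicate (p.1 - 1) 1 ++ [2])
    ++ List.replicate (bs.headD (0,0)).1 1
    ++ bs.dropLast.flatMap (fun p => List.replicate (p.2 - 1) 2 ++ [1])
    ++ List.replicate (bs.getLastD (0,0)).2 2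

def Phi2 (w : List ℕ) : List ℕ := phi2Blocks (blocks w)

/-- The extended Steingrímsson map `Γ` on binary words. -/
def gammaBlocks (bs : List (ℕ × ℕ)) : List ℕ :=
  match bs with
  | [] => []
  | [(m0, n0)] => List.replicate m0 1 ++ List.replicate n0 2
  | (m0, n0) :: rest =>
      List.replicate m0 1
        ++ rest.dropLast.flatMap (fun p => 2 :: List.replicate (p.1 - 1) 1)
        ++ (2 :: List.replicate (rest.getLastD (0,0)).1 1)
        ++ (let ns := n0 :: rest.map Prod.snd
            ns.dropLast.dropLast.flatMap (fun nj => List.replicate (nj - 1) 2 ++ [1])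
              ++ List.replicate (ns.dropLast.getLastD 0 - 1 + ns.getLastD 0) 2)

def Gamma (w : List ℕ) : List ℕ := gammaBlocks (blocks w)

/-- The involution `φ` on binary words. -/
def phi (w : List ℕ) : List ℕ :=
  let bs := blocks w
  let ns := bs.map Prod.snd
  let newms : List ℕ :=
    match (bs.map Prod.fst).reverse with
    | [] => []
    | [a] => [a]
    | a :: rest => (a - 1) :: (rest.dropLast ++ [rest.getLastD 0 + 1])
  blockWord (newms.zip ns)

/-- Fibonacci words: binary words with no two consecutive ones. -/
def IsFib (w : List ℕ) : Prop :=
  IsBinary w ∧ w.Chain' fun a b => ¬(a = 1 ∧ b = 1)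

def FibSet (n : ℕ) : Set (List ℕ) := {w | IsFib w ∧ w.length = n}

/-- Fibonacci words of length `n` ending with the letter 1. -/
def FibSet' (n : ℕ) : Set (List ℕ) :=
  {w | IsFib w ∧ w.length = n ∧ w.getLast? = some 1}

/-- Binary words of length `n` with no two consecutive twos. -/
def GSet (n : ℕ) : Set (List ℕ) :=
  {w | IsBinary w ∧ w.length = n ∧ w.Chain' fun a b => ¬(a = 2 ∧ b = 2)}

/-- The word `1^{m₀} 2^{d+n₀-1} 1 2^{n₁-1} ⋯ 1 2^{n_{d-1}-1} 1 2^{n_d}`. -/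
def Rword (m0 : ℕ) (ns : List ℕ) : List ℕ :=
  match ns with
  | [] => List.replicate m0 1
  | [n0] => List.replicate m0 1 ++ List.replicate n0 2
  | n0 :: rest =>
      List.replicate m0 1 ++ List.replicate (rest.length + n0 - 1) 2
        ++ rest.dropLast.flatMap (fun nj => 1 :: List.replicate (nj - 1) 2)
        ++ (1 :: List.replicate (rest.getLastD 0) 2)

def RSet (n : ℕ) : Set (List ℕ) :=
  {w | ∃ m0 ns, m0 ≤ 1 ∧ ns ≠ [] ∧ (∀ j ∈ List.dropLast ns, 1 ≤ j) ∧
        w = Rword m0 ns ∧ w.length = n}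

/-- The Fibonacci word `1^{m₀} 2^{n₀} 1 2^{n₁} ⋯ 1 2^{n_d}`. -/
def Fword (m0 : ℕ) (ns : List ℕ) : List ℕ :=
  List.replicate m0 1 ++ List.replicate (ns.headD 0) 2
    ++ ns.tail.flatMap fun nj => 1 :: List.replicate nj 2

lemma leadCount_eq (a : ℕ) (l : List ℕ) :
    l = List.replicate (leadCount a l).1 a ++ (leadCount a l).2 := by
  induction l with
  | nil => rfl
  | cons b rest ih =>
    by_cases h : b = a
    · simp only [leadCount, h, if_pos rfl, List.replicate_succ, List.cons_append]
      exact congrArg (a :: ·) ih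
    · simp [leadCount, h]

lemma leadCount_head (a : ℕ) (l : List ℕ) :
    (leadCount a l).2.head? ≠ some a := by
  induction l with
  | nil => simp [leadCount]
  | cons b rest ih =>
    by_cases h : b = a
    · simpa [leadCount, h] using ih
    · simp only [leadCount, h, if_neg h, List.head?_cons]
      intro hb; exact h (Option.some.inj hb)

lemma leadCount_suffix (a : ℕ) (l : List ℕ) :
    (leadCount a l).2 <:+ l := by
  induction l with
  | nil => simp [leadCount]
  | cons b rest ih =>
    by_cases h : b = a
    · simp only [leadCount, h, if_pos rfl]
      exact ih.trans (List.suffix_cons a rest)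
    · simp [leadCount, h]

lemma leadCount_len_le (a : ℕ) (l : List ℕ) : (leadCount a l).2.length ≤ l.length :=
  (leadCount_suffix a l).length_le

lemma rest_lt (w : List ℕ) (hw : IsBinary w) (hne : w ≠ []) :
    (leadCount 2 (leadCount 1 w).2).2.length < w.length := by
  obtain ⟨c, rest, rfl⟩ := List.exists_cons_of_ne_nil hne
  rcases hw c (List.mem_cons_self) with h1 | h2
  · have : (leadCount 1 (c :: rest)).2 = (leadCount 1 rest).2 := by
      simp [leadCount, h1]
    rw [this]
    calc (leadCount 2 (leadCount 1 rest).2).2.length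
        ≤ (leadCount 1 rest).2.length := leadCount_len_le _ _
      _ ≤ rest.length := leadCount_len_le _ _
      _ < (c :: rest).length := by simp
  · have h1 : (leadCount 1 (c :: rest)).2 = c :: rest := by
      simp [leadCount, h2]
    rw [h1]
    have : (leadCount 2 (c :: rest)).2 = (leadCount 2 rest).2 := by
      simp [leadCount, h2]
    rw [this]
    calc (leadCount 2 rest).2.length ≤ rest.length := leadCount_len_le _ _
      _ < (c :: rest).length := by simp

lemma binary_suffix {w r : List ℕ} (hw : IsBinary w) (h : r <:+ w) : IsBinary r :=
  fun a ha => hw a (h.sublist.mem ha)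

lemma rest_binary (w : List ℕ) (hw : IsBinary w) :
    IsBinary (leadCount 2 (leadCount 1 w).2).2 :=
  binary_suffix (binary_suffix hw (leadCount_suffix 1 w)) (leadCount_suffix 2 _)

lemma blocksAux_nil (f : ℕ) : blocksAux f [] = [] := by
  cases f <;> simp [blocksAux]

lemma blocksAux_fuel : ∀ f1 f2 (w : List ℕ), IsBinary w → w.length ≤ f1 → w.length ≤ f2 →
    blocksAux f1 w = blocksAux f2 w := by
  intro f1
  induction f1 with
  | zero =>
    intro f2 w _ h1 _
    have : w = [] := List.eq_nil_of_length_eq_zero (Nat.le_zero.1 h1)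
    subst this
    cases f2 <;> rfl
  | succ f1 ih =>
    intro f2 w hw h1 h2
    match w, f2 with
    | [], _ => rw [blocksAux_nil, blocksAux_nil]
    | c :: t, f2' + 1 =>
      show _ :: _ = _ :: _
      congr 1
      exact ih f2' _ (rest_binary _ hw)
        (Nat.lt_succ_iff.1 (Nat.lt_of_lt_of_le (rest_lt _ hw (by simp)) h1))
        (Nat.lt_succ_iff.1 (Nat.lt_of_lt_of_le (rest_lt _ hw (by simp)) h2))

lemma blocks_cons (w : List ℕ) (hw : IsBinary w) (hne : w ≠ []) :
    blocks w = ((leadCount 1 w).1, (leadCount 2 (leadCount 1 w).2).1)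
      :: blocks (leadCount 2 (leadCount 1 w).2).2 := by
  obtain ⟨c, t, rfl⟩ := List.exists_cons_of_ne_nil hne
  show blocksAux (t.length + 1) (c :: t) = _
  show _ :: _ = _ :: _
  congr 1
  exact blocksAux_fuel t.length _ _ (rest_binary _ hw)
    (Nat.lt_succ_iff.1 (rest_lt _ hw (by simp))) le_rfl

lemma des_nil : des ([] : List ℕ) = 0 := rfl
lemma des_single (a : ℕ) : des [a] = 0 := rfl

lemma des_cons_cons (a b : ℕ) (t : List ℕ) :
    des (a :: b :: t) = (if b < a then 1 else 0) + des (b :: t) := by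
  simp only [des, List.tail_cons, List.zip_cons_cons, List.countP_cons]
  by_cases h : b < a <;> simp [h] <;> omega

lemma des_replicate (n a : ℕ) : des (List.replicate n a) = 0 := by
  induction n with
  | zero => rfl
  | succ n ih =>
    cases n with
    | zero => rfl
    | succ m =>
      rw [List.replicate_succ, List.replicate_succ, des_cons_cons, ← List.replicate_succ]
      simp [ih]

lemma des_rep1 (m : ℕ) (l : List ℕ) (h : ∀ b, l.head? = some b → 1 ≤ b) :
    des (List.replicate m 1 ++ l) = des l := by
  induction m with
  | zero => simp
  | succ m ih =>
    rw [List.replicate_succ, List.cons_append]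
    rcases hL : List.replicate m 1 ++ l with _ | ⟨x, t⟩
    · rcases List.append_eq_nil_iff.1 hL with ⟨h1, h2⟩
      subst h2; simp [des_single, des_nil]
    · have hx : 1 ≤ x := by
        cases m with
        | zero =>
          simp only [List.replicate_zero, List.nil_append] at hL
          exact h x (by rw [hL]; rfl)
        | succ m' =>
          have : x = 1 := by
            rw [List.replicate_succ, List.cons_append] at hL
            exact (List.cons.inj hL).1.symm
          omega
      rw [des_cons_cons, if_neg (by omega), ← hL, ih, Nat.zero_add]

lemma des_rep2 (n : ℕ) (t : List ℕ) :
    des (List.replicate n 2 ++ 1 :: t) = des (1 :: t) + (if n = 0 then 0 else 1) := by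
  induction n with
  | zero => simp
  | succ n ih =>
    rw [List.replicate_succ, List.cons_append]
    cases n with
    | zero =>
      simp only [List.replicate_zero, List.nil_append, des_cons_cons]
      norm_num [Nat.add_comm]
    | succ m =>
      rw [List.replicate_succ, List.cons_append, des_cons_cons, if_neg (by omega),
        ← List.cons_append, ← List.replicate_succ, ih]
      simp

lemma head_rep2 (nn : ℕ) (l : List ℕ) (hl : ∀ b, l.head? = some b → 1 ≤ b) :
    ∀ b, (List.replicate nn 2 ++ l).head? = some b → 1 ≤ b := by
  cases nn with
  | zero => simpa using hl
  | succ k =>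
    intro b hbb
    rw [List.replicate_succ, List.cons_append, List.head?_cons] at hbb
    have := Option.some.inj hbb
    omega

lemma blocks_nil : blocks [] = [] := rfl

lemma main_lemma : ∀ n (w : List ℕ), w.length ≤ n → IsBinary w →
    des w = (blocks w).length - 1 ∧
    w.count 1 = ((blocks w).map Prod.fst).sum ∧
    (w.head? = some 1 → ∀ p ∈ blocks w, 0 < p.1) ∧
    (∀ p ∈ (blocks w).tail, 0 < p.1) := by
  intro n
  induction n with
  | zero =>
    intro w h1 _
    have : w = [] := List.eq_nil_of_length_eq_zero (Nat.le_zero.1 h1)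
    subst this
    simp [blocks_nil, des_nil]
  | succ n ih =>
    intro w hlen hw
    rcases eq_or_ne w [] with rfl | hne
    · simp [blocks_nil, des_nil]
    have hb : blocks w = ((leadCount 1 w).1, (leadCount 2 (leadCount 1 w).2).1)
        :: blocks (leadCount 2 (leadCount 1 w).2).2 := blocks_cons w hw hne
    set m := (leadCount 1 w).1 with hm
    set w1 := (leadCount 1 w).2 with hw1def
    set nn := (leadCount 2 w1).1 with hnn
    set r := (leadCount 2 w1).2 with hrdef
    have hwe : w = List.replicate m 1 ++ w1 := leadCount_eq 1 w
    have hw1e : w1 = List.replicate nn 2 ++ r := leadCount_eq 2 w1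
    have hrbin : IsBinary r := rest_binary w hw
    have hrlen : r.length ≤ n := Nat.lt_succ_iff.1 (lt_of_lt_of_le (rest_lt w hw hne) hlen)
    obtain ⟨ihdes, ihcnt, ihhead, ihtail⟩ := ih r hrlen hrbin
    have hw1head : w1.head? ≠ some 1 := leadCount_head 1 w
    have hrhead : r.head? ≠ some 2 := leadCount_head 2 w1
    have hm_pos : w.head? = some 1 → 0 < m := by
      intro hh
      rcases Nat.eq_zero_or_pos m with h0 | h
      · exfalso
        apply hw1head
        rw [← hh, hwe, h0]
        simp
      · exact h
    have hcnt : w.count 1 = ((blocks w).map Prod.fst).sum := by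
      rw [hb]
      conv_lhs => rw [hwe, hw1e]
      simp [List.count_append, List.count_replicate, ihcnt]
    rcases hre : r with _ | ⟨x, t⟩
    · -- r = []
      have hbr : blocks r = [] := by rw [hre]; rfl
      rw [hre] at hw1e
      refine ⟨?_, hcnt, ?_, ?_⟩
      · rw [hb, hbr]
        conv_lhs => rw [hwe, hw1e]
        rw [des_rep1 _ _ (head_rep2 nn [] (by simp)), List.append_nil, des_replicate]
        rfl
      · intro hh p hp
        rw [hb, hbr] at hp
        simp at hp
        rw [hp]
        exact hm_pos hh
      · rw [hb, hbr]
        simp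
    · -- r = x :: t, x = 1
      have hx : x = 1 := by
        rcases hrbin x (by rw [hre]; exact List.mem_cons_self) with h | h
        · exact h
        · exfalso; apply hrhead; rw [hre, h]; rfl
      subst hx
      have hnn_pos : nn ≠ 0 := by
        intro h0
        apply hw1head
        rw [hw1e, h0, hre]
        rfl
      have hbrne : blocks r ≠ [] := by
        rw [blocks_cons r hrbin (by rw [hre]; simp)]
        simp
      have hdes : des w = (blocks w).length - 1 := by
        conv_lhs => rw [hwe, hw1e, hre]
        rw [des_rep1 _ _ (head_rep2 nn (1 :: t) (by intro b hbb; simp at hbb; omega)),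
          des_rep2, if_neg hnn_pos, hb]
        have hh1 : des (1 :: t) = (blocks r).length - 1 := by rw [← hre]; exact ihdes
        rw [hh1]
        have hh2 : 0 < (blocks r).length := List.length_pos_iff.2 hbrne
        simp only [List.length_cons]
        omega
      have hrh1 : r.head? = some 1 := by rw [hre]; rfl
      refine ⟨hdes, hcnt, ?_, ?_⟩
      · intro hh p hp
        rw [hb] at hp
        rcases List.mem_cons.1 hp with h | h
        · rw [h]; exact hm_pos hh
        · exact ihhead hrh1 p h
      · rw [hb]
        intro p hp
        exact ihhead hrh1 p hp

lemma flatA (l : List (ℕ × ℕ)) (hl : ∀ p ∈ l, 0 < p.1) :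
    (l.flatMap (fun p => List.replicate (p.1 - 1) 1 ++ [2])).length = (l.map Prod.fst).sum ∧
    (l.flatMap (fun p => List.replicate (p.1 - 1) 1 ++ [2])).count 2 = l.length ∧
    (l.flatMap (fun p => List.replicate (p.1 - 1) 1 ++ [2])).count 1 + l.length
      = (l.map Prod.fst).sum := by
  induction l with
  | nil => simp
  | cons p t ih =>
    have hp := hl p (List.mem_cons_self)
    obtain ⟨ih1, ih2, ih3⟩ := ih (fun q hq => hl q (List.mem_cons_of_mem p hq))
    simp only [List.flatMap_cons, List.length_append, List.length_replicate,
      List.count_append, List.count_replicate, List.count_singleton, List.map_cons,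
      List.sum_cons, List.length_cons, ih1]
    norm_num
    omega

lemma flatB (l : List (ℕ × ℕ)) :
    (l.flatMap (fun p => List.replicate (p.2 - 1) 2 ++ [1])).count 1 = l.length := by
  induction l with
  | nil => simp
  | cons p t ih =>
    simp only [List.flatMap_cons, List.count_append, List.count_replicate,
      List.count_singleton, List.length_cons, ih]
    norm_num
    omega

theorem stmt_2 (w : List ℕ) (hw : IsBinary w) :
    des w = exc (Phi2 w) ∧ ((Phi2 w).take (w.count 1)).count 2 = des w := by
  rcases eq_or_ne w [] with rfl | hne
  · exact ⟨rfl, rfl⟩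
  obtain ⟨hdes, hcnt, _, htail⟩ := main_lemma w.length w le_rfl hw
  have hb := blocks_cons w hw hne
  set m0 := (leadCount 1 w).1
  set n0 := (leadCount 2 (leadCount 1 w).2).1
  set t := blocks (leadCount 2 (leadCount 1 w).2).2 with ht
  rw [hb] at hdes hcnt htail
  simp only [List.length_cons, Nat.add_sub_cancel, List.map_cons, List.sum_cons,
    List.tail_cons] at hdes hcnt htail
  -- decompose Phi2 w
  have hphi : Phi2 w = (t.reverse.flatMap (fun p => List.replicate (p.1 - 1) 1 ++ [2]))
      ++ (List.replicate m0 1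
      ++ ((((m0, n0) :: t).dropLast.flatMap (fun p => List.replicate (p.2 - 1) 2 ++ [1]))
      ++ List.replicate (((m0, n0) :: t).getLastD (0,0)).2 2)) := by
    rw [Phi2, hb, phi2Blocks]
    simp only [List.tail_cons, List.headD_cons, List.append_assoc]
  obtain ⟨hA1, hA2, hA3⟩ := flatA t.reverse (fun p hp => htail p (List.mem_reverse.1 hp))
  rw [List.map_reverse, List.sum_reverse] at hA1 hA3
  rw [List.length_reverse] at hA2 hA3
  set A := t.reverse.flatMap (fun p => List.replicate (p.1 - 1) 1 ++ [2]) with hAdef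
  set B := (((m0, n0) :: t).dropLast.flatMap (fun p => List.replicate (p.2 - 1) 2 ++ [1]))
    with hBdef
  have hB : B.count 1 = t.length := by
    rw [hBdef, flatB, List.length_dropLast, List.length_cons, Nat.add_sub_cancel]
  -- count of 1 in Phi2 w
  have hc1 : (Phi2 w).count 1 = w.count 1 := by
    rw [hphi, hcnt]
    simp only [List.count_append, List.count_replicate, hB]
    norm_num
    omega
  have htake : (Phi2 w).take (w.count 1) = A ++ List.replicate m0 1 := by
    rw [hphi, hcnt, ← hA1, Nat.add_comm, List.take_append]
    congr 1
    · simp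
    rw [Nat.add_sub_cancel_left]
    simpa using List.take_left (List.replicate m0 1)
      (B ++ List.replicate (((m0, n0) :: t).getLastD (0,0)).2 2)
  have hcount2 : ((Phi2 w).take (w.count 1)).count 2 = t.length := by
    rw [htake, List.count_append, hA2, List.count_replicate]
    norm_num
  refine ⟨?_, by rw [hcount2, hdes]⟩
  rw [exc, hc1, hcount2, hdes]
end

section
/- Let F_n be the set of Fibonacci words of length n (binary words on {1,2} with no two consecutive ones), and let R_n be the set of binary words of length n of the form 1^{m_0} 2^{d + n_0 − 1} 1 2^{n_1 − 1} ⋯ 1 2^{n_{d−1} − 1} 1 2^{n_d} with m_0 ∈ {0,1}, n_j ≥ 1 for 0 ≤ j ≤ d−1, and n_d ≥ 0. Then Ψ(F_n) = R_n, where Ψ is the restriction of the inverse of Foata's first transformation to binary words, and consequently for every k, #{ω ∈ F_n : des(ω) = k} = #{w ∈ R_n : exc(w) = k}. -/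
/-!
A Fibonacci word is `1^{m₀} 2^{n₀} 1 2^{n₁} ⋯ 1 2^{n_d}` with `m₀ ≤ 1` and `n_j ≥ 1` for
`j < d`. Its descent blocks are `(m₀, n₀), (1, n₁), …, (1, n_d)`, so `Ψ` sends it to
`1^{m₀} 2^{d + n₀ - 1} 1 2^{n₁ - 1} ⋯ 1 2^{n_{d-1} - 1} 1 2^{n_d}`, a word of `R_n`.
The parameters can be read back from that word (its leading ones, its first run of twos, and
the runs of twos after each later one), so `Ψ : F_n → R_n` is a bijection. Both `des` of the
Fibonacci word and `exc` of its image equal `d`, which gives the equidistribution.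
-/

namespace List

lemma replicate_append_inj {α : Type*} {x : α} {a b : ℕ} {l l' : List α}
    (hl : l.head? ≠ some x) (hl' : l'.head? ≠ some x)
    (h : replicate a x ++ l = replicate b x ++ l') : a = b ∧ l = l' := by
  induction a generalizing b with
  | zero =>
    cases b with
    | zero => simpa using h
    | succ b => subst h; simp [replicate_succ] at hl
  | succ a ih =>
    cases b with
    | zero => subst h; simp [replicate_succ] at hl'
    | succ b =>
      simp only [replicate_succ, cons_append, cons.injEq, true_and] at h
      simpa using ih h

lemma cons_flatMap_append_singleton {α β : Type*} (x : β) (f : α → List β) (l : List α)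
    (t : List β) :
    x :: (l.flatMap (fun a => f a ++ [x]) ++ t) = l.flatMap (fun a => x :: f a) ++ x :: t := by
  induction l with
  | nil => rfl
  | cons a l ih => simp [ih]

end List

theorem Set.ncard_sep_eq_of_bijOn {α β γ : Type*} {f : α → β} {s : Set α} {t : Set β}
    (hf : Set.BijOn f s t) {g : β → γ} {h : α → γ} (hgh : ∀ x ∈ s, g (f x) = h x)
    (c : γ) :
    {x ∈ s | h x = c}.ncard = {y ∈ t | g y = c}.ncard := by
  have himage : f '' {x ∈ s | h x = c} = {y ∈ t | g y = c} := by
    ext y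
    constructor
    · rintro ⟨x, ⟨hx, rfl⟩, rfl⟩
      exact ⟨hf.mapsTo hx, hgh x hx⟩
    · rintro ⟨hy, rfl⟩
      obtain ⟨x, hx, rfl⟩ := hf.surjOn hy
      exact ⟨x, ⟨hx, (hgh x hx).symm⟩, rfl⟩
  rw [← himage, (hf.injOn.mono fun x hx => hx.1).ncard_image]

namespace Fibonacci

open List

def segWord (rs : List ℕ) : List ℕ := rs.flatMap fun r => 1 :: replicate r 2

@[simp] lemma segWord_nil : segWord [] = [] := rfl

@[simp] lemma segWord_cons (r : ℕ) (rs : List ℕ) :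
    segWord (r :: rs) = 1 :: (replicate r 2 ++ segWord rs) := by
  simp [segWord]

@[simp] lemma length_segWord (rs : List ℕ) : (segWord rs).length = rs.length + rs.sum := by
  induction rs with
  | nil => rfl
  | cons r rs ih => simp [ih]; omega

@[simp] lemma count_one_segWord (rs : List ℕ) : (segWord rs).count 1 = rs.length := by
  induction rs with
  | nil => rfl
  | cons r rs ih => simp [ih, count_replicate]

lemma head?_segWord {rs : List ℕ} (h : rs ≠ []) : (segWord rs).head? = some 1 := by
  cases rs <;> simp_all

lemma head?_segWord_ne_two (rs : List ℕ) : (segWord rs).head? ≠ some 2 := by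
  cases rs <;> simp

lemma head?_replicate_two_append_segWord {n : ℕ} {rs : List ℕ} (h : rs = [] ∨ n ≠ 0) :
    (replicate n 2 ++ segWord rs).head? ≠ some 1 := by
  rcases h with rfl | h
  · cases n <;> simp [replicate_succ]
  · obtain ⟨n, rfl⟩ := Nat.exists_eq_add_one_of_ne_zero h
    simp [replicate_succ]

lemma segWord_injective : Function.Injective segWord := by
  intro rs rs' h
  induction rs generalizing rs' with
  | nil => cases rs' <;> simp_all
  | cons r rs ih =>
    cases rs' with
    | nil => simp at h
    | cons r' rs' =>
      simp only [segWord_cons, cons.injEq, true_and] at h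
      obtain ⟨rfl, hrs⟩ :=
        replicate_append_inj (head?_segWord_ne_two _) (head?_segWord_ne_two _) h
      rw [ih hrs]

lemma replicate_append_replicate_append_segWord_inj {a a' b b' : ℕ} {rs rs' : List ℕ}
    (hb : rs = [] ∨ b ≠ 0) (hb' : rs' = [] ∨ b' ≠ 0)
    (h : replicate a 1 ++ (replicate b 2 ++ segWord rs) =
      replicate a' 1 ++ (replicate b' 2 ++ segWord rs')) :
    a = a' ∧ b = b' ∧ rs = rs' := by
  obtain ⟨rfl, h₂⟩ := replicate_append_inj (head?_replicate_two_append_segWord hb)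
    (head?_replicate_two_append_segWord hb') h
  obtain ⟨rfl, hrs⟩ :=
    replicate_append_inj (head?_segWord_ne_two _) (head?_segWord_ne_two _) h₂
  exact ⟨rfl, rfl, segWord_injective hrs⟩

lemma forall_mem_dropLast_cons {a : ℕ} {l : List ℕ} (ha : 1 ≤ a)
    (hl : ∀ j ∈ l.dropLast, 1 ≤ j) :
    ∀ j ∈ (a :: l).dropLast, 1 ≤ j := by
  cases l with
  | nil => simp
  | cons b l =>
    intro j hj
    rw [dropLast_cons_cons] at hj
    rcases mem_cons.mp hj with rfl | hj
    exacts [ha, hl j hj]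

lemma forall_mem_dropLast_of_cons {a : ℕ} {l : List ℕ}
    (h : ∀ j ∈ (a :: l).dropLast, 1 ≤ j) :
    ∀ j ∈ l.dropLast, 1 ≤ j := fun j hj =>
  h j (mem_of_mem_tail (by rwa [tail_dropLast]))

-- Writing the entries that must be positive as `k + 1` frees all later computations from the
-- side condition on `ns.dropLast`.
lemma eq_singleton_or_exists_succ_cons {ns : List ℕ} (hne : ns ≠ [])
    (hv : ∀ j ∈ ns.dropLast, 1 ≤ j) :
    (∃ n0, ns = [n0]) ∨
      ∃ (n0 : ℕ) (ks : List ℕ) (l : ℕ), ns = (n0 + 1) :: (ks.map (· + 1) ++ [l]) := by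
  rw [← dropLast_append_getLast hne] at hv ⊢
  rw [dropLast_concat] at hv
  rcases h : ns.dropLast with _ | ⟨a, init⟩
  · exact Or.inl ⟨_, rfl⟩
  · rw [h] at hv
    have hinit : (init.map (· - 1)).map (· + 1) = init := by
      rw [map_map]
      exact (map_congr_left fun j hj => Nat.sub_add_cancel (hv j (mem_cons_of_mem a hj))).trans
        (map_id init)
    refine Or.inr ⟨a - 1, init.map (· - 1), ns.getLast hne, ?_⟩
    rw [hinit, Nat.sub_add_cancel (hv a mem_cons_self), cons_append]

lemma fword_cons (m0 n0 : ℕ) (rest : List ℕ) :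
    Fword m0 (n0 :: rest) = replicate m0 1 ++ (replicate n0 2 ++ segWord rest) := by
  simp [Fword, segWord]

lemma rword_singleton (m0 n0 : ℕ) :
    Rword m0 [n0] = replicate m0 1 ++ (replicate n0 2 ++ segWord []) := by
  simp [Rword]

lemma rword_succ_cons_append_singleton (m0 n0 l : ℕ) (ks : List ℕ) :
    Rword m0 ((n0 + 1) :: (ks.map (· + 1) ++ [l])) =
      replicate m0 1 ++ (replicate (ks.length + n0 + 1) 2 ++ segWord (ks ++ [l])) := by
  rw [Rword.eq_3 _ _ _ (by simp)]
  simp [segWord, flatMap_map, Nat.add_right_comm]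

lemma leadCount_replicate_append {a : ℕ} (n : ℕ) {l : List ℕ} (hl : l.head? ≠ some a) :
    leadCount a (replicate n a ++ l) = (n, l) := by
  induction n with
  | zero =>
    cases l with
    | nil => rfl
    | cons b l => simp_all [leadCount]
  | succ n ih => simp [replicate_succ, leadCount, ih]

@[simp] lemma blocksAux_nil (fuel : ℕ) : blocksAux fuel [] = [] := by
  cases fuel <;> rfl

lemma blocksAux_replicate_append {m n fuel : ℕ} {l : List ℕ} (hl : l.head? ≠ some 2)
    (hnl : (replicate n 2 ++ l).head? ≠ some 1)
    (hne : replicate m 1 ++ (replicate n 2 ++ l) ≠ []) :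
    blocksAux (fuel + 1) (replicate m 1 ++ (replicate n 2 ++ l)) = (m, n) :: blocksAux fuel l := by
  obtain ⟨b, w, hw⟩ := exists_cons_of_ne_nil hne
  have h1 := leadCount_replicate_append (a := 1) m hnl
  have h2 := leadCount_replicate_append n hl
  rw [hw] at h1 ⊢
  simp only [blocksAux, h1, h2]

lemma blocksAux_segWord (ks : List ℕ) (l : ℕ) {fuel : ℕ}
    (hfuel : (segWord (ks.map (· + 1) ++ [l])).length ≤ fuel) :
    blocksAux fuel (segWord (ks.map (· + 1) ++ [l])) = (ks.map (· + 1) ++ [l]).map (1, ·) := by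
  induction ks generalizing fuel with
  | nil =>
    obtain ⟨f, rfl⟩ := Nat.exists_eq_add_one_of_ne_zero (n := fuel) (by simp at hfuel; omega)
    simpa using blocksAux_replicate_append (m := 1) (n := l) (l := []) (fuel := f) (by simp)
      (by cases l <;> simp [replicate_succ]) (by simp)
  | cons k ks ih =>
    obtain ⟨f, rfl⟩ := Nat.exists_eq_add_one_of_ne_zero (n := fuel) (by simp at hfuel; omega)
    have := blocksAux_replicate_append (m := 1) (n := k + 1) (fuel := f)
      (head?_segWord_ne_two (ks.map (· + 1) ++ [l])) (by simp [replicate_succ]) (by simp)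
    simp only [map_cons, cons_append, segWord_cons]
    simp only [replicate_one, singleton_append] at this
    rw [this, ih (by simp at hfuel ⊢; omega)]

lemma blocks_fword_succ_cons_append_singleton (m0 n0 l : ℕ) (ks : List ℕ) :
    blocks (Fword m0 ((n0 + 1) :: (ks.map (· + 1) ++ [l]))) =
      (m0, n0 + 1) :: (ks.map (· + 1) ++ [l]).map (1, ·) := by
  rw [blocks, fword_cons]
  obtain ⟨f, hf⟩ := Nat.exists_eq_add_one_of_ne_zero
    (n := (replicate m0 1 ++ (replicate (n0 + 1) 2 ++ segWord (ks.map (· + 1) ++ [l]))).length)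
    (by simp)
  rw [hf, blocksAux_replicate_append (head?_segWord_ne_two _) (by simp [replicate_succ])
    (by simp [replicate_succ]), blocksAux_segWord]
  simp at hf ⊢
  omega

lemma psiBlocks_succ_cons_append_singleton (m0 n0 l : ℕ) (ks : List ℕ) :
    psiBlocks ((m0, n0 + 1) :: (ks.map (· + 1) ++ [l]).map (1, ·)) =
      replicate m0 1 ++ (replicate (ks.length + n0 + 1) 2 ++ segWord (ks ++ [l])) := by
  have hdrop : ((m0, n0 + 1) :: (ks.map (· + 1) ++ [l]).map (1, ·)).dropLast =
      (m0, n0 + 1) :: (ks.map (· + 1)).map (1, ·) := by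
    rw [map_append, dropLast_cons_of_ne_nil (by simp), map_singleton, dropLast_concat]
  have hlast :
      ((m0, n0 + 1) :: (ks.map (· + 1) ++ [l]).map (1, ·)).getLastD (0, 0) = (1, l) := by
    rw [getLastD_eq_getLast?, getLast?_cons, map_append, map_singleton, getLast?_append]
    simp
  have htwos (rs : List ℕ) :
      (rs.map (1, ·)).flatMap (fun p : ℕ × ℕ => 2 :: replicate (p.1 - 1) 1) =
        replicate rs.length 2 := by
    induction rs <;> simp_all [replicate_succ]
  have hones :
      ((ks.map (· + 1)).map (1, ·)).flatMap (fun p : ℕ × ℕ => replicate (p.2 - 1) 2 ++ [1]) =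
        ks.flatMap fun k => replicate k 2 ++ [1] := by
    simp [flatMap_map]
  rw [psiBlocks, hdrop, hlast, headD_cons, tail_cons, htwos, length_append, length_map,
    length_singleton, flatMap_cons, hones]
  simp only [Nat.add_sub_cancel, append_assoc, singleton_append]
  rw [← append_assoc (replicate _ 2), ← replicate_add, Nat.add_right_comm]
  simpa [segWord] using cons_flatMap_append_singleton 1 (fun k => replicate k 2) ks (replicate l 2)

lemma psi_replicate_replicate (m n : ℕ) :
    Psi (replicate m 1 ++ replicate n 2) = replicate m 1 ++ replicate n 2 := by
  rcases Nat.eq_zero_or_pos (m + n) with h | h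
  · obtain ⟨rfl, rfl⟩ : m = 0 ∧ n = 0 := by omega
    rfl
  obtain ⟨f, hf⟩ := Nat.exists_eq_add_one_of_ne_zero (n := m + n) (by omega)
  have hblocks : blocks (replicate m 1 ++ replicate n 2) = [(m, n)] := by
    have := blocksAux_replicate_append (m := m) (n := n) (fuel := f) (head?_segWord_ne_two [])
      (head?_replicate_two_append_segWord (Or.inl rfl)) (by simp; omega)
    simpa [blocks, hf] using this
  simp [Psi, hblocks, psiBlocks]

lemma psi_fword (m0 : ℕ) {ns : List ℕ} (hne : ns ≠ []) (hv : ∀ j ∈ ns.dropLast, 1 ≤ j) :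
    Psi (Fword m0 ns) = Rword m0 ns := by
  rcases eq_singleton_or_exists_succ_cons hne hv with ⟨n0, rfl⟩ | ⟨n0, ks, l, rfl⟩
  · simpa [Fword, Rword] using psi_replicate_replicate m0 n0
  · rw [Psi, blocks_fword_succ_cons_append_singleton, psiBlocks_succ_cons_append_singleton,
      rword_succ_cons_append_singleton]

lemma length_rword (m0 : ℕ) {ns : List ℕ} (hne : ns ≠ [])
    (hv : ∀ j ∈ ns.dropLast, 1 ≤ j) :
    (Rword m0 ns).length = (Fword m0 ns).length := by
  rcases eq_singleton_or_exists_succ_cons hne hv with ⟨n0, rfl⟩ | ⟨n0, ks, l, rfl⟩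
  · simp [Rword, Fword]
  · simp [rword_succ_cons_append_singleton, fword_cons, sum_map_add]
    omega

lemma eq_and_eq_of_rword_eq {m0 m0' : ℕ} {ns ns' : List ℕ} (hne : ns ≠ [])
    (hv : ∀ j ∈ ns.dropLast, 1 ≤ j) (hne' : ns' ≠ []) (hv' : ∀ j ∈ ns'.dropLast, 1 ≤ j)
    (h : Rword m0 ns = Rword m0' ns') :
    m0 = m0' ∧ ns = ns' := by
  rcases eq_singleton_or_exists_succ_cons hne hv with ⟨n0, rfl⟩ | ⟨n0, ks, l, rfl⟩ <;>
  rcases eq_singleton_or_exists_succ_cons hne' hv' with ⟨n0', rfl⟩ | ⟨n0', ks', l', rfl⟩ <;>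
  simp only [rword_singleton, rword_succ_cons_append_singleton] at h
  · obtain ⟨rfl, rfl, -⟩ := replicate_append_replicate_append_segWord_inj (by simp) (by simp) h
    exact ⟨rfl, rfl⟩
  · simpa using (replicate_append_replicate_append_segWord_inj (by simp) (by simp) h).2.2
  · simpa using (replicate_append_replicate_append_segWord_inj (by simp) (by simp) h).2.2
  · obtain ⟨rfl, hlen, hrs⟩ :=
      replicate_append_replicate_append_segWord_inj (by simp) (by simp) h
    obtain ⟨rfl, hl⟩ := append_inj' hrs rfl
    obtain rfl : l = l' := by simpa using hl
    obtain rfl : n0 = n0' := by omega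
    exact ⟨rfl, rfl⟩

lemma exc_replicate_append {m L : ℕ} {rs : List ℕ} (h : rs.length ≤ L) :
    exc (replicate m 1 ++ (replicate L 2 ++ segWord rs)) = rs.length := by
  simp [exc, count_replicate, take_append, take_replicate, h]

lemma exc_rword (m0 : ℕ) {ns : List ℕ} (hne : ns ≠ []) (hv : ∀ j ∈ ns.dropLast, 1 ≤ j) :
    exc (Rword m0 ns) = ns.length - 1 := by
  rcases eq_singleton_or_exists_succ_cons hne hv with ⟨n0, rfl⟩ | ⟨n0, ks, l, rfl⟩
  · rw [rword_singleton, exc_replicate_append (by simp)]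
    rfl
  · rw [rword_succ_cons_append_singleton, exc_replicate_append (by simp)]
    simp

lemma des_cons_of_le {a : ℕ} {l : List ℕ} (h : ∀ b ∈ l.head?, a ≤ b) :
    des (a :: l) = des l := by
  cases l with
  | nil => rfl
  | cons b l => simp_all [des]

lemma des_cons_of_lt {a b : ℕ} {l : List ℕ} (hl : l.head? = some b) (hb : b < a) :
    des (a :: l) = des l + 1 := by
  obtain ⟨l, rfl⟩ : ∃ l', l = b :: l' := by cases l <;> simp_all
  simp [des, hb]

lemma des_replicate_append_of_le {x n : ℕ} {l : List ℕ} (h : ∀ b ∈ l.head?, x ≤ b) :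
    des (replicate n x ++ l) = des l := by
  induction n with
  | zero => rfl
  | succ n ih =>
    rw [replicate_succ, cons_append, des_cons_of_le, ih]
    cases n <;> simp_all [replicate_succ]

lemma des_replicate (n x : ℕ) : des (replicate n x) = 0 := by
  have := des_replicate_append_of_le (n := n) (x := x) (l := []) nofun
  rwa [append_nil] at this

lemma des_replicate_append_of_lt {x n b : ℕ} {l : List ℕ} (hn : n ≠ 0) (hl : l.head? = some b)
    (hb : b < x) : des (replicate n x ++ l) = des l + 1 := by
  obtain ⟨n, rfl⟩ := Nat.exists_eq_add_one_of_ne_zero hn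
  rw [replicate_succ', append_assoc, des_replicate_append_of_le (by simp),
    singleton_append, des_cons_of_lt hl hb]

lemma des_segWord (ks : List ℕ) (l : ℕ) :
    des (segWord (ks.map (· + 1) ++ [l])) = ks.length := by
  induction ks with
  | nil =>
    rw [map_nil, nil_append, segWord_cons, des_cons_of_le (by cases l <;> simp [replicate_succ]),
      segWord_nil, append_nil, des_replicate, length_nil]
  | cons k ks ih =>
    rw [map_cons, cons_append, segWord_cons, des_cons_of_le (by simp [replicate_succ]),
      des_replicate_append_of_lt (by simp) (head?_segWord (by simp)) one_lt_two, ih, length_cons]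

lemma des_fword (m0 : ℕ) {ns : List ℕ} (hne : ns ≠ []) (hv : ∀ j ∈ ns.dropLast, 1 ≤ j) :
    des (Fword m0 ns) = ns.length - 1 := by
  rcases eq_singleton_or_exists_succ_cons hne hv with ⟨n0, rfl⟩ | ⟨n0, ks, l, rfl⟩
  · rw [fword_cons, segWord_nil, append_nil,
      des_replicate_append_of_le (by cases n0 <;> simp [replicate_succ]), des_replicate]
    rfl
  · rw [fword_cons, des_replicate_append_of_le (by simp [replicate_succ]),
      des_replicate_append_of_lt (by simp) (head?_segWord (by simp)) one_lt_two, des_segWord]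
    simp

lemma isFib_nil : IsFib [] := ⟨nofun, isChain_nil⟩

lemma isFib_cons_iff {a : ℕ} {l : List ℕ} :
    IsFib (a :: l) ↔ (a = 1 ∨ a = 2) ∧ (a = 1 → l.head? ≠ some 1) ∧ IsFib l := by
  simp only [IsFib, IsBinary, mem_cons, forall_eq_or_imp]
  constructor
  · rintro ⟨⟨ha, hl⟩, hchain⟩
    obtain ⟨hhead, hchain⟩ := isChain_cons.mp hchain
    exact ⟨ha, fun h1 h => hhead 1 h ⟨h1, rfl⟩, hl, hchain⟩
  · rintro ⟨ha, hhead, hl, hchain⟩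
    exact ⟨⟨ha, hl⟩, isChain_cons.mpr ⟨fun b hb ⟨h1, hb1⟩ => hhead h1 (hb1 ▸ hb), hchain⟩⟩

lemma isFib_replicate_two_append {n : ℕ} {l : List ℕ} (h : IsFib l) :
    IsFib (replicate n 2 ++ l) := by
  induction n with
  | zero => exact h
  | succ n ih => simpa [replicate_succ, isFib_cons_iff] using ih

lemma isFib_segWord (ks : List ℕ) (l : ℕ) : IsFib (segWord (ks.map (· + 1) ++ [l])) := by
  induction ks with
  | nil =>
    rw [map_nil, nil_append, segWord_cons, segWord_nil]
    exact isFib_cons_iff.mpr ⟨Or.inl rfl, fun _ => by cases l <;> simp [replicate_succ],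
      isFib_replicate_two_append isFib_nil⟩
  | cons k ks ih =>
    rw [map_cons, cons_append, segWord_cons]
    exact isFib_cons_iff.mpr ⟨Or.inl rfl, fun _ => by simp [replicate_succ],
      isFib_replicate_two_append ih⟩

lemma isFib_fword {m0 : ℕ} {ns : List ℕ} (hm : m0 ≤ 1) (hne : ns ≠ [])
    (hv : ∀ j ∈ ns.dropLast, 1 ≤ j) : IsFib (Fword m0 ns) := by
  have htail : IsFib (replicate (ns.headD 0) 2 ++ segWord ns.tail) ∧
      (replicate (ns.headD 0) 2 ++ segWord ns.tail).head? ≠ some 1 := by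
    rcases eq_singleton_or_exists_succ_cons hne hv with ⟨n0, rfl⟩ | ⟨n0, ks, l, rfl⟩
    · exact ⟨isFib_replicate_two_append isFib_nil,
        head?_replicate_two_append_segWord (Or.inl rfl)⟩
    · exact ⟨isFib_replicate_two_append (isFib_segWord ks l),
        head?_replicate_two_append_segWord (Or.inr (by simp))⟩
  obtain ⟨n0, rest, rfl⟩ := exists_cons_of_ne_nil hne
  rw [fword_cons]
  interval_cases m0
  · exact htail.1
  · exact isFib_cons_iff.mpr ⟨Or.inl rfl, fun _ => htail.2, htail.1⟩

lemma exists_fword_of_isFib {w : List ℕ} (hw : IsFib w) :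
    ∃ m0 ns, m0 ≤ 1 ∧ ns ≠ [] ∧ (∀ j ∈ ns.dropLast, 1 ≤ j) ∧ w = Fword m0 ns := by
  induction w with
  | nil => exact ⟨0, [0], zero_le_one, cons_ne_nil _ _, by simp, rfl⟩
  | cons a w ih =>
    obtain ⟨ha, hhead, hw⟩ := isFib_cons_iff.mp hw
    obtain ⟨m0, ns, hm, hne, hv, rfl⟩ := ih hw
    obtain ⟨n0, rest, rfl⟩ := exists_cons_of_ne_nil hne
    rcases ha with rfl | rfl <;> interval_cases m0
    · exact ⟨1, _, le_rfl, hne, hv, by simp [fword_cons]⟩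
    · exact absurd (by simp [fword_cons]) (hhead rfl)
    · exact ⟨0, (n0 + 1) :: rest, zero_le_one, cons_ne_nil _ _,
        forall_mem_dropLast_cons le_add_self (forall_mem_dropLast_of_cons hv),
        by simp [fword_cons, replicate_succ]⟩
    · exact ⟨0, 1 :: n0 :: rest, zero_le_one, cons_ne_nil _ _,
        forall_mem_dropLast_cons le_rfl hv, by simp [fword_cons]⟩

lemma bijOn_psi_fibSet (n : ℕ) : Set.BijOn Psi (FibSet n) (RSet n) := by
  refine ⟨?_, ?_, ?_⟩
  · rintro v ⟨hv, rfl⟩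
    obtain ⟨m0, ns, hm, hne, hvalid, rfl⟩ := exists_fword_of_isFib hv
    rw [psi_fword m0 hne hvalid]
    exact ⟨m0, ns, hm, hne, hvalid, rfl, length_rword m0 hne hvalid⟩
  · rintro v ⟨hv, -⟩ v' ⟨hv', -⟩ h
    obtain ⟨m0, ns, -, hne, hvalid, rfl⟩ := exists_fword_of_isFib hv
    obtain ⟨m0', ns', -, hne', hvalid', rfl⟩ := exists_fword_of_isFib hv'
    rw [psi_fword m0 hne hvalid, psi_fword m0' hne' hvalid'] at h
    obtain ⟨rfl, rfl⟩ := eq_and_eq_of_rword_eq hne hvalid hne' hvalid' h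
    rfl
  · rintro w ⟨m0, ns, hm, hne, hvalid, rfl, hlen⟩
    exact ⟨Fword m0 ns, ⟨isFib_fword hm hne hvalid, length_rword m0 hne hvalid ▸ hlen⟩,
      psi_fword m0 hne hvalid⟩

lemma exc_psi_of_isFib {v : List ℕ} (hv : IsFib v) : exc (Psi v) = des v := by
  obtain ⟨m0, ns, -, hne, hvalid, rfl⟩ := exists_fword_of_isFib hv
  rw [psi_fword m0 hne hvalid, exc_rword m0 hne hvalid, des_fword m0 hne hvalid]

end Fibonacci

theorem stmt_7 (n : ℕ) :
    Psi '' FibSet n = RSet n ∧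
      ∀ k, {w ∈ FibSet n | des w = k}.ncard = {w ∈ RSet n | exc w = k}.ncard := by
  have hbij := Fibonacci.bijOn_psi_fibSet n
  exact ⟨hbij.image_eq,
    Set.ncard_sep_eq_of_bijOn hbij fun _ hv => Fibonacci.exc_psi_of_isFib hv.1⟩
end

section
/- Let F'_n be the set of Fibonacci words of length n ending with the letter 1. The map Ψ (inverse Foata first transformation on binary words) restricted to F'_n is injective, and Ψ(F'_n) = {ω ∈ Ψ(F_n) : ω ends with 1}. -/
open List Function Set

theorem leadCount_replicate_append {a : ℕ} {r : List ℕ} (h : r.head? ≠ some a) (k : ℕ) :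
    leadCount a (replicate k a ++ r) = (k, r) := by
  induction k with
  | zero =>
    cases r with
    | nil => rfl
    | cons b t => simp_all [leadCount]
  | succ k ih => simp [replicate_succ, leadCount, ih]

theorem leadCount_spec (a : ℕ) :
    ∀ w : List ℕ, replicate (leadCount a w).1 a ++ (leadCount a w).2 = w ∧
      (leadCount a w).2.head? ≠ some a
  | [] => by simp [leadCount]
  | b :: t => by
    by_cases hb : b = a
    · subst hb
      simpa [leadCount, replicate_succ] using leadCount_spec b t
    · simp [leadCount, hb]

theorem eq_of_replicate_append_eq {a k k' : ℕ} {r r' : List ℕ} (h : r.head? ≠ some a)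
    (h' : r'.head? ≠ some a) (he : replicate k a ++ r = replicate k' a ++ r') :
    k = k' ∧ r = r' := by
  simpa [leadCount_replicate_append h, leadCount_replicate_append h'] using
    congrArg (leadCount a) he

def blockRest (w : List ℕ) : List ℕ := (leadCount 2 (leadCount 1 w).2).2

theorem blocksAux_succ_cons (f b : ℕ) (t : List ℕ) :
    blocksAux (f + 1) (b :: t) =
      ((leadCount 1 (b :: t)).1, (leadCount 2 (leadCount 1 (b :: t)).2).1) ::
        blocksAux f (blockRest (b :: t)) :=
  rfl

theorem length_blockRest_lt {w : List ℕ} (hw : IsBinary w) (hne : w ≠ []) :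
    (blockRest w).length < w.length := by
  have hp := congrArg length (leadCount_spec 1 w).1
  have hq := congrArg length (leadCount_spec 2 (leadCount 1 w).2).1
  simp only [length_append, length_replicate] at hp hq
  obtain ⟨b, t, rfl⟩ := exists_cons_of_ne_nil hne
  rw [blockRest]
  rcases hw b mem_cons_self with rfl | rfl
  · have : 0 < (leadCount 1 (1 :: t)).1 := by simp [leadCount]
    omega
  · have h1 : leadCount 1 (2 :: t) = (0, 2 :: t) := by simp [leadCount]
    have : 0 < (leadCount 2 (2 :: t)).1 := by simp [leadCount]
    simp only [h1] at hq ⊢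
    omega

theorem IsBinary.blockRest {w : List ℕ} (hw : IsBinary w) :
    IsBinary (blockRest w) := by
  intro x hx
  apply hw
  rw [← (leadCount_spec 1 w).1, ← (leadCount_spec 2 (leadCount 1 w).2).1]
  exact mem_append_right _ (mem_append_right _ hx)

theorem blocksAux_eq_blocks {f : ℕ} {w : List ℕ} (hw : IsBinary w) (hf : w.length ≤ f) :
    blocksAux f w = blocks w := by
  induction f using Nat.strong_induction_on generalizing w with
  | _ f ih =>
    rcases w with _ | ⟨b, t⟩
    · cases f <;> rfl
    obtain ⟨f, rfl⟩ : ∃ f', f = f' + 1 := ⟨f - 1, by simp at hf; omega⟩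
    have hlt := length_blockRest_lt hw (cons_ne_nil b t)
    simp only [length_cons] at hf hlt
    rw [blocks, length_cons, blocksAux_succ_cons, blocksAux_succ_cons,
      ih f (by omega) hw.blockRest (by omega), ih t.length (by omega) hw.blockRest (by omega)]

theorem blocks_eq_cons {w : List ℕ} (hw : IsBinary w) (hne : w ≠ []) :
    blocks w = ((leadCount 1 w).1, (leadCount 2 (leadCount 1 w).2).1) ::
      blocks (blockRest w) := by
  obtain ⟨b, t, rfl⟩ := exists_cons_of_ne_nil hne
  have hlt := length_blockRest_lt hw (cons_ne_nil b t)
  rw [blocks, length_cons, blocksAux_succ_cons,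
    blocksAux_eq_blocks hw.blockRest (by simpa using hlt)]

theorem blocks_replicate_append {m n : ℕ} {r : List ℕ} (hr : IsBinary r)
    (hr2 : r.head? ≠ some 2) (hr1 : n = 0 → r.head? ≠ some 1) (hmn : 0 < m + n) :
    blocks (replicate m 1 ++ replicate n 2 ++ r) = (m, n) :: blocks r := by
  have hw : IsBinary (replicate m 1 ++ replicate n 2 ++ r) := by
    intro x hx
    simp only [mem_append, mem_replicate] at hx
    rcases hx with (h | h) | h
    exacts [Or.inl h.2, Or.inr h.2, hr x h]
  have hne : replicate m 1 ++ replicate n 2 ++ r ≠ [] := by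
    simp only [ne_eq, append_eq_nil_iff, replicate_eq_nil_iff]
    omega
  have h1 : leadCount 1 (replicate m 1 ++ replicate n 2 ++ r) = (m, replicate n 2 ++ r) := by
    rw [append_assoc]
    apply leadCount_replicate_append
    cases n with
    | zero => simpa using hr1 rfl
    | succ n => simp [replicate_succ]
  rw [blocks_eq_cons hw hne, blockRest, h1]
  simp only [leadCount_replicate_append hr2 n]

def runWord (m : ℕ) (ns : List ℕ) : List ℕ :=
  replicate m 1 ++ ns.flatMap fun n => replicate n 2 ++ [1]

theorem flatMap_replicate_append_singleton_injective {a b : ℕ} (hab : b ≠ a) :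
    Injective fun ns : List ℕ => ns.flatMap fun n => replicate n a ++ [b] := by
  intro ns
  induction ns with
  | nil =>
    rintro (_ | ⟨n', ns'⟩) h
    · rfl
    · simp at h
  | cons n ns ih =>
    rintro (_ | ⟨n', ns'⟩) h
    · simp at h
    · simp only [flatMap_cons, append_assoc, singleton_append] at h
      obtain ⟨rfl, htail⟩ := eq_of_replicate_append_eq (by simpa using hab) (by simpa using hab) h
      exact congrArg _ (ih (cons.inj htail).2)

theorem runWord_inj {m m' : ℕ} {ns ns' : List ℕ} (h : ns.head? ≠ some 0)
    (h' : ns'.head? ≠ some 0) (he : runWord m ns = runWord m' ns') : m = m' ∧ ns = ns' := by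
  have head_ne : ∀ l : List ℕ, l.head? ≠ some 0 →
      (l.flatMap fun n => replicate n 2 ++ [1]).head? ≠ some 1 := by
    rintro (_ | ⟨n, l⟩) hl
    · simp
    · obtain ⟨n, rfl⟩ := Nat.exists_eq_succ_of_ne_zero (by simpa using hl)
      simp [replicate_succ]
  obtain ⟨rfl, hruns⟩ := eq_of_replicate_append_eq (head_ne ns h) (head_ne ns' h') he
  exact ⟨rfl, flatMap_replicate_append_singleton_injective (a := 2) (b := 1) (by decide) hruns⟩

theorem IsBinary.runWord_append_replicate (m k : ℕ) (ns : List ℕ) :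
    IsBinary (runWord m ns ++ replicate k 2) := by
  intro x hx
  simp only [runWord, mem_append, mem_flatMap, mem_replicate, List.mem_singleton] at hx
  rcases hx with (h | ⟨n, -, h | h⟩) | h
  exacts [Or.inl h.2, Or.inr h.2, Or.inl h, Or.inr h.2]

theorem blocks_replicate_append_replicate {m k : ℕ} (h : 0 < m + k) :
    blocks (replicate m 1 ++ replicate k 2) = [(m, k)] := by
  have := blocks_replicate_append (r := []) (by simp [IsBinary]) (by simp) (by simp) h
  rwa [append_nil] at this

theorem blocks_runWord_cons_append_replicate (m k : ℕ) {n : ℕ} {ns : List ℕ} (hn : 0 < n)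
    (hns : ∀ n ∈ ns, 0 < n) :
    blocks (runWord m (n :: ns) ++ replicate k 2) = (m, n) :: (ns ++ [k]).map ((1, ·)) := by
  have hsplit : runWord m (n :: ns) ++ replicate k 2 =
      replicate m 1 ++ replicate n 2 ++ (runWord 1 ns ++ replicate k 2) := by
    simp [runWord]
  rw [hsplit, blocks_replicate_append (.runWord_append_replicate 1 k ns) (by simp [runWord])
    (by omega) (by omega)]
  congr 1
  cases ns with
  | nil => simpa [runWord] using blocks_replicate_append_replicate (m := 1) (k := k) (by omega)
  | cons n' ns =>
    exact blocks_runWord_cons_append_replicate 1 k (hns n' mem_cons_self)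
      fun n h => hns n (mem_cons_of_mem _ h)

def psiRuns : List ℕ → List ℕ
  | [] => []
  | n :: ns => (ns.length + n) :: ns.map (· - 1)

theorem psiBlocks_cons_map (m k : ℕ) {n : ℕ} (ns : List ℕ) (hn : 0 < n) :
    psiBlocks ((m, n) :: (ns ++ [k]).map ((1, ·))) =
      runWord m (psiRuns (n :: ns)) ++ replicate k 2 := by
  have hconst : ∀ l : List ℕ, l.flatMap (fun _ => [2]) = replicate l.length 2 := by
    intro l
    induction l <;> simp_all [replicate_succ]
  obtain ⟨n, rfl⟩ := Nat.exists_eq_succ_of_ne_zero hn.ne'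
  rw [map_append, map_singleton, ← cons_append]
  simp only [psiBlocks, dropLast_concat, getLastD_concat]
  simp [runWord, psiRuns, flatMap_map, hconst, replicate_add, replicate_succ]

theorem Psi_runWord_append_replicate (m k : ℕ) {ns : List ℕ} (hns : ∀ n ∈ ns, 0 < n) :
    Psi (runWord m ns ++ replicate k 2) = runWord m (psiRuns ns) ++ replicate k 2 := by
  cases ns with
  | nil =>
    rcases Nat.eq_zero_or_pos (m + k) with h | h
    · obtain ⟨rfl, rfl⟩ : m = 0 ∧ k = 0 := by omega
      rfl
    · simp [Psi, runWord, psiRuns, blocks_replicate_append_replicate h, psiBlocks]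
  | cons n ns =>
    have hn := hns n mem_cons_self
    rw [Psi, blocks_runWord_cons_append_replicate m k hn fun n h => hns n (mem_cons_of_mem _ h),
      psiBlocks_cons_map m k ns hn]

theorem IsFib.exists_runWord {w : List ℕ} (hw : IsFib w) :
    ∃ m ns k, m ≤ 1 ∧ (∀ n ∈ ns, 0 < n) ∧ w = runWord m ns ++ replicate k 2 := by
  induction w with
  | nil => exact ⟨0, [], 0, zero_le_one, by simp, rfl⟩
  | cons b t ih =>
    have ht : IsFib t := ⟨fun a ha => hw.1 a (mem_cons_of_mem b ha), hw.2.tail⟩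
    obtain ⟨m, ns, k, hm, hns, rfl⟩ := ih ht
    rcases hw.1 b mem_cons_self with rfl | rfl
    · obtain rfl : m = 0 := by
        by_contra hm0
        obtain rfl : m = 1 := by omega
        exact (isChain_cons_cons.mp hw.2).1 ⟨rfl, rfl⟩
      exact ⟨1, ns, k, le_rfl, hns, by simp [runWord]⟩
    · rcases Nat.le_one_iff_eq_zero_or_eq_one.mp hm with rfl | rfl
      · cases ns with
        | nil => exact ⟨0, [], k + 1, zero_le_one, hns, by simp [runWord, replicate_succ]⟩
        | cons n ns =>
          refine ⟨0, (n + 1) :: ns, k, zero_le_one, ?_, by simp [runWord, replicate_succ]⟩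
          simpa using (forall_mem_cons.mp hns).2
      · exact ⟨0, 1 :: ns, k, zero_le_one, by simpa using hns, by simp [runWord]⟩

theorem getLast?_runWord_append_replicate_eq_some_one {m k : ℕ} {ns : List ℕ} :
    (runWord m ns ++ replicate k 2).getLast? = some 1 ↔ k = 0 ∧ (ns ≠ [] ∨ m ≠ 0) := by
  rcases eq_nil_or_concat ns with rfl | ⟨ns, n, rfl⟩
  · by_cases hk : k = 0 <;> by_cases hm : m = 0 <;> simp [runWord, getLast?_replicate, hk, hm]
  · by_cases hk : k = 0 <;> simp [runWord, getLast?_replicate, getLast?_cons, hk]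

theorem psiRuns_eq_nil {ns : List ℕ} : psiRuns ns = [] ↔ ns = [] := by
  cases ns <;> simp [psiRuns]

theorem head?_psiRuns_ne_some_zero {ns : List ℕ} (hns : ∀ n ∈ ns, 0 < n) :
    (psiRuns ns).head? ≠ some 0 := by
  cases ns with
  | nil => simp [psiRuns]
  | cons n ns =>
    simp only [psiRuns, head?_cons, ne_eq, Option.some.injEq]
    have := hns n mem_cons_self
    omega

theorem psiRuns_injOn : InjOn psiRuns {ns | ∀ n ∈ ns, 0 < n} := by
  rintro (_ | ⟨n, ns⟩) hns (_ | ⟨n', ns'⟩) hns' h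
  · rfl
  · simp [psiRuns] at h
  · simp [psiRuns] at h
  · simp only [psiRuns, cons.injEq] at h
    have recover : ∀ l : List ℕ, (∀ n ∈ l, 0 < n) → (l.map (· - 1)).map (· + 1) = l := by
      intro l hl
      rw [map_map]
      exact (map_congr_left fun n hn => Nat.sub_add_cancel (hl n hn)).trans (map_id l)
    have hns_eq : ns = ns' := by
      rw [← recover ns (forall_mem_cons.mp hns).2, ← recover ns' (forall_mem_cons.mp hns').2, h.2]
    subst hns_eq
    rw [Nat.add_left_cancel h.1]

theorem IsFib.getLast?_Psi_eq_some_one_iff {w : List ℕ} (hw : IsFib w) :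
    (Psi w).getLast? = some 1 ↔ w.getLast? = some 1 := by
  obtain ⟨m, ns, k, -, hns, rfl⟩ := hw.exists_runWord
  rw [Psi_runWord_append_replicate m k hns, getLast?_runWord_append_replicate_eq_some_one,
    getLast?_runWord_append_replicate_eq_some_one, Ne, Ne, psiRuns_eq_nil]

theorem injOn_Psi_isFib_getLast?_eq_some_one :
    InjOn Psi {w | IsFib w ∧ w.getLast? = some 1} := by
  rintro _ ⟨hw, hlast⟩ _ ⟨hw', hlast'⟩ he
  obtain ⟨m, ns, k, -, hns, rfl⟩ := hw.exists_runWord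
  obtain ⟨m', ns', k', -, hns', rfl⟩ := hw'.exists_runWord
  obtain rfl := (getLast?_runWord_append_replicate_eq_some_one.mp hlast).1
  obtain rfl := (getLast?_runWord_append_replicate_eq_some_one.mp hlast').1
  rw [Psi_runWord_append_replicate m 0 hns, Psi_runWord_append_replicate m' 0 hns'] at he
  obtain ⟨rfl, hruns⟩ := runWord_inj (head?_psiRuns_ne_some_zero hns)
    (head?_psiRuns_ne_some_zero hns') (by simpa using he)
  rw [psiRuns_injOn hns hns' hruns]

theorem stmt_9 (n : ℕ) :
    Set.InjOn Psi (FibSet' n) ∧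
      Psi '' FibSet' n = {w ∈ Psi '' FibSet n | w.getLast? = some 1} := by
  have hsub : FibSet' n ⊆ {w | IsFib w ∧ w.getLast? = some 1} := fun _ hw => ⟨hw.1, hw.2.2⟩
  refine ⟨injOn_Psi_isFib_getLast?_eq_some_one.mono hsub, ?_⟩
  ext u
  constructor
  · rintro ⟨w, ⟨hw, hlen, hlast⟩, rfl⟩
    exact ⟨⟨w, ⟨hw, hlen⟩, rfl⟩, hw.getLast?_Psi_eq_some_one_iff.mpr hlast⟩
  · rintro ⟨⟨w, ⟨hw, hlen⟩, rfl⟩, hlast⟩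
    exact ⟨w, ⟨hw, hlen, hw.getLast?_Psi_eq_some_one_iff.mp hlast⟩, rfl⟩
end
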